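/- arXiv:2407.16474 — 4 statements merged into one kernel-verified Lean document; each statement's English description precedes it below -/
import Mathlib

section
/- For every integer n ≥ 1, every integer j and every x ≥ 0, (S_{n,j}e_0)(x) = 1; moreover, if j ≥ 1, then (S_{n,j}e_j)(x) = x^j, i.e. S_{n,j} preserves the constant function e_0 and the monomial e_j. -/
open MeasureTheory Real Filter

/-- Szász basis function `s_{n,k}(x)` for natural index `k`. -/
noncomputable def szasz (n k : ℕ) (x : ℝ) : ℝ :=
  Real.exp (-(n : ℝ) * x) * ((n : ℝ) * x) ^ k / (Nat.factorial k)

/-- Szász basis function for integer index, vanishing for negative index. -/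
noncomputable def szaszZ (n : ℕ) (k : ℤ) (x : ℝ) : ℝ :=
  if 0 ≤ k then szasz n k.toNat x else 0

/-- The generalized Szász–Mirakjan–Durrmeyer operator `S_{n,j}`. -/
noncomputable def Sop (n : ℕ) (j : ℤ) (f : ℝ → ℝ) (x : ℝ) : ℝ :=
  f 0 * ∑ k ∈ Finset.range j.toNat, szasz n k x
    + ∑' (k : ℕ), szasz n k x *
        ((n : ℝ) * ∫ t in Set.Ioi (0 : ℝ), szaszZ n ((k : ℤ) - j) t * f t)

/-- Membership in the class `E_A`: locally integrable on `[0,∞)` with exponential growth. -/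
def MemE (A : ℝ) (f : ℝ → ℝ) : Prop :=
  MeasureTheory.LocallyIntegrableOn f (Set.Ici 0) ∧
    ∃ K > 0, ∀ t ≥ (0 : ℝ), |f t| ≤ K * Real.exp (A * t)

/-- Falling factorial `a↓r = a(a-1)⋯(a-r+1)` for integer `a`. -/
def ffall (a : ℤ) (r : ℕ) : ℤ := ∏ i ∈ Finset.range r, (a - i)

lemma szasz_eq (n k : ℕ) (x : ℝ) :
    szasz n k x = Real.exp (-(n : ℝ) * x) * (((n : ℝ) * x) ^ k / k.factorial) := by
  rw [szasz]; ring

lemma summable_szasz (n : ℕ) (x : ℝ) : Summable (fun k : ℕ => szasz n k x) := by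
  simp_rw [szasz_eq]
  exact (Real.summable_pow_div_factorial _).mul_left _

lemma tsum_szasz (n : ℕ) (x : ℝ) : ∑' k : ℕ, szasz n k x = 1 := by
  simp_rw [szasz_eq]
  rw [tsum_mul_left]
  have h : ∑' k : ℕ, ((n : ℝ) * x) ^ k / k.factorial = Real.exp ((n : ℝ) * x) := by
    rw [Real.exp_eq_exp_ℝ, NormedSpace.exp_eq_tsum_div]
  rw [h, ← Real.exp_add]
  simp

lemma integral_pow_exp {c : ℝ} (hc : 0 < c) (m : ℕ) :
    ∫ t in Set.Ioi (0 : ℝ), t ^ m * Real.exp (-(c * t)) = m.factorial / c ^ (m + 1) := by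
  have h := Real.integral_rpow_mul_exp_neg_mul_Ioi
    (a := (m : ℝ) + 1) (r := c) (by positivity) hc
  rw [show ((m : ℝ) + 1) - 1 = ((m : ℕ) : ℝ) by push_cast; ring] at h
  simp_rw [Real.rpow_natCast] at h
  rw [h, Real.Gamma_nat_eq_factorial]
  rw [show ((m : ℝ) + 1) = ((m + 1 : ℕ) : ℝ) by push_cast; ring, Real.rpow_natCast]
  rw [one_div, inv_pow]
  field_simp

lemma integral_szasz (n : ℕ) (hn : 0 < (n : ℝ)) (m r : ℕ) :
    ∫ t in Set.Ioi (0 : ℝ), szasz n m t * t ^ r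
      = (m + r).factorial / (m.factorial * (n : ℝ) ^ (r + 1)) := by
  have h : ∀ t : ℝ, szasz n m t * t ^ r
      = ((n : ℝ) ^ m / m.factorial) * (t ^ (m + r) * Real.exp (-((n : ℝ) * t))) := by
    intro t
    rw [szasz, mul_pow, neg_mul, pow_add]
    ring
  simp_rw [h]
  rw [MeasureTheory.integral_const_mul, integral_pow_exp hn]
  have hn0 : (n : ℝ) ≠ 0 := ne_of_gt hn
  have hf : (m.factorial : ℝ) ≠ 0 := Nat.cast_ne_zero.mpr m.factorial_ne_zero
  rw [show m + r + 1 = m + (r + 1) by ring, pow_add]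
  field_simp

set_option maxHeartbeats 1000000 in
/-- `S_{n,j}` preserves `e_0`, and for `j ≥ 1` also the monomial `e_j`. -/
theorem stmt_0 (n : ℕ) (hn : 1 ≤ n) (j : ℤ) (x : ℝ) (hx : 0 ≤ x) :
    Sop n j (fun _ => 1) x = 1 ∧
      (1 ≤ j → Sop n j (fun t => t ^ j.toNat) x = x ^ j.toNat) := by
  have hnpos : 0 < (n : ℝ) := by exact_mod_cast hn
  have hn0 : (n : ℝ) ≠ 0 := ne_of_gt hnpos
  set jn := j.toNat with hjn
  constructor
  · -- f = 1
    rw [Sop]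
    set g : ℕ → ℝ := fun k => szasz n k x *
      ((n : ℝ) * ∫ t in Set.Ioi (0 : ℝ), szaszZ n ((k : ℤ) - j) t * (fun _ : ℝ => 1) t)
      with hg
    have hgval : ∀ k : ℕ, g k = if jn ≤ k then szasz n k x else 0 := by
      intro k
      by_cases hk : jn ≤ k
      · have hk' : j ≤ (k : ℤ) := Int.toNat_le.mp hk
        have h0 : 0 ≤ (k : ℤ) - j := by omega
        have hint : (∫ t in Set.Ioi (0 : ℝ),
            szaszZ n ((k : ℤ) - j) t * (fun _ : ℝ => 1) t) = 1 / (n : ℝ) := by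
          have : ∀ t : ℝ, szaszZ n ((k : ℤ) - j) t * (fun _ : ℝ => 1) t
              = szasz n ((k : ℤ) - j).toNat t * t ^ 0 := by
            intro t; simp only [szaszZ, if_pos h0, pow_zero, mul_one]
          simp_rw [this]
          rw [integral_szasz n hnpos _ 0]
          have hf : ((((k : ℤ) - j).toNat).factorial : ℝ) ≠ 0 :=
            Nat.cast_ne_zero.mpr (Nat.factorial_ne_zero _)
          field_simp
          simp only [add_zero, zero_add, pow_one]
        simp only [hg]
        rw [hint, if_pos hk]
        field_simp
      · have hk' : (k : ℤ) - j < 0 := by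
          have : ¬ j ≤ (k : ℤ) := fun h => hk (Int.toNat_le.mpr h)
          omega
        have : ∀ t : ℝ, szaszZ n ((k : ℤ) - j) t * (fun _ : ℝ => 1) t = 0 := by
          intro t; simp only [szaszZ, if_neg (not_le.mpr hk'), zero_mul]
        simp only [hg, if_neg hk]
        simp_rw [this]
        simp
    have hsum' : Summable (fun i : ℕ => g (i + jn)) := by
      have : (fun i : ℕ => g (i + jn)) = fun i : ℕ => szasz n (i + jn) x := by
        funext i; rw [hgval, if_pos (Nat.le_add_left _ _)]
      rw [this]
      exact (summable_nat_add_iff jn).mpr (summable_szasz n x)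
    have hgsum : Summable g := (summable_nat_add_iff jn).mp hsum'
    have h1 : ∑' k, g k = ∑ i ∈ Finset.range jn, g i + ∑' i : ℕ, g (i + jn) :=
      (Summable.sum_add_tsum_nat_add jn hgsum).symm
    have h2 : ∑ i ∈ Finset.range jn, g i = 0 := by
      apply Finset.sum_eq_zero
      intro i hi
      rw [hgval, if_neg (not_le.mpr (Finset.mem_range.mp hi))]
    have h3 : ∑' i : ℕ, g (i + jn) = ∑' i : ℕ, szasz n (i + jn) x := by
      congr 1; funext i; rw [hgval, if_pos (Nat.le_add_left _ _)]
    have h4 : ∑ i ∈ Finset.range jn, szasz n i x + ∑' i : ℕ, szasz n (i + jn) x = 1 := by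
      rw [Summable.sum_add_tsum_nat_add jn (summable_szasz n x), tsum_szasz]
    rw [show (∑' (k : ℕ), szasz n k x *
        ((n : ℝ) * ∫ t in Set.Ioi (0 : ℝ), szaszZ n ((k : ℤ) - j) t * (fun _ : ℝ => 1) t))
      = ∑' k, g k from rfl, h1, h2, h3, one_mul, zero_add]
    exact h4
  · -- f = t ^ jn, with 1 ≤ j
    intro hj
    have hjn1 : 1 ≤ jn := by
      rw [hjn]; omega
    have hjcast : (jn : ℤ) = j := Int.toNat_of_nonneg (by omega)
    rw [Sop]
    rw [zero_pow (show jn ≠ 0 by omega), zero_mul, zero_add]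
    set g : ℕ → ℝ := fun k => szasz n k x *
      ((n : ℝ) * ∫ t in Set.Ioi (0 : ℝ), szaszZ n ((k : ℤ) - j) t * t ^ jn)
      with hg
    have hgval : ∀ k : ℕ, g k = if jn ≤ k then x ^ jn * szasz n (k - jn) x else 0 := by
      intro k
      by_cases hk : jn ≤ k
      · set m := k - jn with hm
        have hkm : k = m + jn := by omega
        have hcast : (k : ℤ) - j = (m : ℤ) := by
          rw [← hjcast]; omega
        have hint : (∫ t in Set.Ioi (0 : ℝ),
            szaszZ n ((k : ℤ) - j) t * t ^ jn)
            = (m + jn).factorial / (m.factorial * (n : ℝ) ^ (jn + 1)) := by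
          have heq : ∀ t : ℝ, szaszZ n ((k : ℤ) - j) t * t ^ jn
              = szasz n m t * t ^ jn := by
            intro t
            simp only [szaszZ, hcast, Int.toNat_natCast]
            rw [if_pos (Int.natCast_nonneg m)]
          simp_rw [heq]
          exact integral_szasz n hnpos m jn
        simp only [hg]
        rw [hint, if_pos hk, szasz, szasz, hkm]
        have hf1 : ((m + jn).factorial : ℝ) ≠ 0 := Nat.cast_ne_zero.mpr (Nat.factorial_ne_zero _)
        have hf2 : ((m).factorial : ℝ) ≠ 0 := Nat.cast_ne_zero.mpr (Nat.factorial_ne_zero _)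
        rw [mul_pow, mul_pow, pow_add, pow_add, pow_add]
        field_simp
      · have hk' : (k : ℤ) - j < 0 := by
          have : ¬ ((jn : ℤ) ≤ (k : ℤ)) := by exact_mod_cast hk
          omega
        have : ∀ t : ℝ, szaszZ n ((k : ℤ) - j) t * t ^ jn = 0 := by
          intro t; simp only [szaszZ, if_neg (not_le.mpr hk'), zero_mul]
        simp only [hg, if_neg hk]
        simp_rw [this]
        simp
    have hsum' : Summable (fun i : ℕ => g (i + jn)) := by
      have : (fun i : ℕ => g (i + jn)) = fun i : ℕ => x ^ jn * szasz n i x := by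
        funext i
        rw [hgval, if_pos (Nat.le_add_left _ _), Nat.add_sub_cancel]
      rw [this]
      exact (summable_szasz n x).mul_left _
    have hgsum : Summable g := (summable_nat_add_iff jn).mp hsum'
    have h1 : ∑' k, g k = ∑ i ∈ Finset.range jn, g i + ∑' i : ℕ, g (i + jn) :=
      (Summable.sum_add_tsum_nat_add jn hgsum).symm
    have h2 : ∑ i ∈ Finset.range jn, g i = 0 := by
      apply Finset.sum_eq_zero
      intro i hi
      rw [hgval, if_neg (not_le.mpr (Finset.mem_range.mp hi))]
    have h3 : ∑' i : ℕ, g (i + jn) = x ^ jn := by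
      have : (fun i : ℕ => g (i + jn)) = fun i : ℕ => x ^ jn * szasz n i x := by
        funext i
        rw [hgval, if_pos (Nat.le_add_left _ _), Nat.add_sub_cancel]
      rw [this, tsum_mul_left, tsum_szasz, mul_one]
    rw [h1, h2, h3, zero_add]
end

section
/- Let j ∈ ℤ, A ≥ 0 and n > A. Then for every x ≥ 0, (S_{n,j}exp_A)(x) ≤ 1 + ((n-A)/n)^{j-1} · e^{Anx/(n-A)}, where exp_A(t) = e^{At}. -/
open MeasureTheory Real Filter

lemma tsum_exp_div (z : ℝ) : ∑' k : ℕ, z ^ k / (Nat.factorial k) = Real.exp z := by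
  rw [Real.exp_eq_exp_ℝ, NormedSpace.exp_eq_tsum_div]

lemma szasz_nonneg {n k : ℕ} {x : ℝ} (hx : 0 ≤ x) : 0 ≤ szasz n k x := by
  have h : (0:ℝ) ≤ (n:ℝ) * x := by positivity
  unfold szasz
  positivity

lemma szasz_mul_pow (n k : ℕ) (x y : ℝ) :
    szasz n k x * y ^ k = Real.exp (-(n:ℝ) * x) * (((n:ℝ) * x * y) ^ k / (Nat.factorial k)) := by
  unfold szasz; rw [mul_pow]; ring

lemma summable_szasz_mul_pow (n : ℕ) (x y : ℝ) :
    Summable (fun k : ℕ => szasz n k x * y ^ k) := by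
  simp_rw [szasz_mul_pow]
  exact (Real.summable_pow_div_factorial _).mul_left _

lemma tsum_szasz_mul_pow (n : ℕ) (x y : ℝ) :
    ∑' k : ℕ, szasz n k x * y ^ k = Real.exp ((n:ℝ) * x * y - (n:ℝ) * x) := by
  simp_rw [szasz_mul_pow]
  rw [tsum_mul_left, tsum_exp_div, ← Real.exp_add]
  congr 1
  ring

lemma szasz_integral (n : ℕ) (A : ℝ) (hA : 0 ≤ A) (hn : A < n) (m : ℕ) :
    (n:ℝ) * ∫ t in Set.Ioi (0:ℝ), szasz n m t * Real.exp (A * t)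
      = ((n:ℝ) / ((n:ℝ) - A)) ^ (m + 1) := by
  have hn0 : (0:ℝ) < n := lt_of_le_of_lt hA hn
  have hr : 0 < (n:ℝ) - A := by linarith
  have key := integral_rpow_mul_exp_neg_mul_Ioi (a := (m:ℝ) + 1) (r := (n:ℝ) - A)
    (by positivity) hr
  simp only [add_sub_cancel_right] at key
  rw [Real.Gamma_nat_eq_factorial] at key
  simp_rw [Real.rpow_natCast] at key
  rw [show ((m:ℝ) + 1) = ((m + 1 : ℕ) : ℝ) by push_cast; ring, Real.rpow_natCast] at key
  have heq : ∀ t : ℝ, szasz n m t * Real.exp (A * t)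
      = ((n:ℝ)^m / (Nat.factorial m)) * (t ^ m * Real.exp (-(((n:ℝ) - A) * t))) := by
    intro t
    unfold szasz
    rw [mul_pow, show -(((n:ℝ)-A)*t) = (-(n:ℝ)*t) + A*t by ring, Real.exp_add]
    ring
  simp_rw [heq]
  rw [MeasureTheory.integral_const_mul, key]
  have hf : ((Nat.factorial m : ℝ)) ≠ 0 := Nat.cast_ne_zero.2 m.factorial_ne_zero
  field_simp
  ring

/-- bound for `S_{n,j}` applied to `exp_A`. -/
theorem stmt_1 (j : ℤ) (A : ℝ) (hA : 0 ≤ A) (n : ℕ) (hn : A < n) (x : ℝ) (hx : 0 ≤ x) :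
    Sop n j (fun t => Real.exp (A * t)) x ≤
      1 + (((n : ℝ) - A) / n) ^ (j - 1) * Real.exp (A * n * x / ((n : ℝ) - A)) := by
  have hn0 : (0:ℝ) < n := lt_of_le_of_lt hA hn
  have hr : 0 < (n:ℝ) - A := by linarith
  set c : ℝ := (n:ℝ) / ((n:ℝ) - A) with hc
  have hc0 : 0 < c := by positivity
  unfold Sop
  simp only [mul_zero, Real.exp_zero, one_mul]
  -- first sum
  have hs1 := summable_szasz_mul_pow n x 1
  have ht1 := tsum_szasz_mul_pow n x 1
  simp only [one_pow, mul_one] at hs1 ht1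
  have h1 : ∑ k ∈ Finset.range j.toNat, szasz n k x ≤ 1 := by
    calc ∑ k ∈ Finset.range j.toNat, szasz n k x
        ≤ ∑' k : ℕ, szasz n k x := Summable.sum_le_tsum _ (fun k _ => szasz_nonneg hx) hs1
      _ = 1 := by rw [ht1]; simp
  -- second sum
  set g : ℕ → ℝ := fun k => c ^ ((1:ℤ) - j) * (szasz n k x * c ^ k) with hg
  have hg_sum : Summable g := (summable_szasz_mul_pow n x c).mul_left _
  set term : ℕ → ℝ := fun k => szasz n k x *
      ((n:ℝ) * ∫ t in Set.Ioi (0:ℝ), szaszZ n ((k:ℤ) - j) t * Real.exp (A * t)) with hterm_def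
  have hterm : ∀ k : ℕ, term k ≤ g k := by
    intro k
    by_cases hkj : 0 ≤ (k:ℤ) - j
    · have hsz : ∀ t : ℝ, szaszZ n ((k:ℤ)-j) t = szasz n ((k:ℤ)-j).toNat t := by
        intro t; simp only [szaszZ, if_pos hkj]
      have hmain : term k = szasz n k x * c ^ (((k:ℤ)-j).toNat + 1) := by
        rw [hterm_def]
        simp only
        rw [show (fun t => szaszZ n ((k:ℤ)-j) t * Real.exp (A * t))
            = fun t => szasz n ((k:ℤ)-j).toNat t * Real.exp (A * t) from
          funext fun t => by rw [hsz], szasz_integral n A hA hn]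
      rw [hmain, hg]
      have hm : ((((k:ℤ)-j).toNat : ℤ)) = (k:ℤ) - j := Int.toNat_of_nonneg hkj
      have hzp : (c ^ (((k:ℤ)-j).toNat + 1) : ℝ) = c ^ ((1:ℤ) - j) * c ^ (k:ℕ) := by
        rw [← zpow_natCast c (((k:ℤ)-j).toNat + 1), ← zpow_natCast c k,
          ← zpow_add₀ hc0.ne']
        congr 1
        push_cast [hm]
        ring
      rw [hzp]
      exact le_of_eq (by ring)
    · have hz : ∀ t : ℝ, szaszZ n ((k:ℤ)-j) t * Real.exp (A * t) = 0 := by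
        intro t; simp only [szaszZ, if_neg hkj, zero_mul]
      have : term k = 0 := by
        rw [hterm_def]; simp only
        simp_rw [hz]
        simp
      rw [this, hg]
      exact mul_nonneg (zpow_nonneg hc0.le _)
        (mul_nonneg (szasz_nonneg hx) (pow_nonneg hc0.le _))
  have hterm_nonneg : ∀ k : ℕ, 0 ≤ term k := by
    intro k
    refine mul_nonneg (szasz_nonneg hx) (mul_nonneg hn0.le ?_)
    refine MeasureTheory.setIntegral_nonneg measurableSet_Ioi fun t ht => ?_
    refine mul_nonneg ?_ (Real.exp_pos _).le
    unfold szaszZ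
    split
    · exact szasz_nonneg (le_of_lt ht)
    · exact le_refl 0
  have hterm_sum : Summable term := Summable.of_nonneg_of_le hterm_nonneg hterm hg_sum
  have h2 : ∑' k, term k ≤ ∑' k, g k := Summable.tsum_le_tsum hterm hterm_sum hg_sum
  have h3 : ∑' k, g k = c ^ ((1:ℤ) - j) * Real.exp (A * n * x / ((n:ℝ) - A)) := by
    rw [hg, tsum_mul_left, tsum_szasz_mul_pow]
    congr 2
    rw [hc]
    field_simp
    ring
  have h4 : (((n:ℝ) - A) / (n:ℝ)) ^ (j - 1) = c ^ ((1:ℤ) - j) := by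
    rw [show ((n:ℝ)-A)/(n:ℝ) = c⁻¹ by rw [hc, inv_div], inv_zpow, ← zpow_neg, neg_sub]
  rw [h4]
  have h5 : ∑' k, term k ≤ c ^ ((1:ℤ) - j) * Real.exp (A * n * x / ((n:ℝ) - A)) :=
    h3 ▸ h2
  linarith
end

section
/- Let j ∈ ℤ, n ≥ 1 an integer, x ≥ 0 and s ∈ ℕ with s ≥ 1. Then (S_{n,j}ψ_x^s)(x) = ∑_{k=0}^{⌊s/2⌋} (x^k/(k! n^{s-k})) · s↓(2k) · (s-k-j)↓(s-2k) − e^{-nx} ∑_{r=1}^{s} C(s,r)(-x)^{s-r} n^{-r} ∑_{k=0}^{j-1-r} ((nx)^k/k!) · (k+r-j)↓r, where sums whose upper limit is smaller than their lower limit are zero. -/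
open MeasureTheory Real Filter

namespace SA


lemma ffall_zero (a : ℤ) : ffall a 0 = 1 := by simp [ffall]

lemma ffall_succ (a : ℤ) (r : ℕ) : ffall a (r + 1) = ffall a r * (a - r) := by
  simp [ffall, Finset.prod_range_succ]

lemma ffall_succ_left (a : ℤ) (r : ℕ) : ffall a (r + 1) = a * ffall (a - 1) r := by
  unfold ffall
  rw [Finset.prod_range_succ']
  rw [Finset.prod_congr rfl (fun i (_ : i ∈ Finset.range r) => by push_cast; ring :
    ∀ i ∈ Finset.range r, a - ((i + 1 : ℕ) : ℤ) = (a - 1) - i)]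
  push_cast
  ring

lemma ffall_eq_zero {a : ℤ} {r : ℕ} (h0 : 0 ≤ a) (h : a < r) : ffall a r = 0 := by
  apply Finset.prod_eq_zero (i := a.toNat)
  · simp only [Finset.mem_range]
    omega
  · simp [Int.toNat_of_nonneg h0]

lemma ffall_add_exponent (a : ℤ) (p q : ℕ) :
    ffall a (p + q) = ffall a p * ffall (a - p) q := by
  unfold ffall
  rw [Finset.prod_range_add]
  congr 1
  refine Finset.prod_congr rfl fun i _ => by push_cast; ring

lemma ffall_mul_factorial (m i : ℕ) :
    ffall ((m + i : ℕ) : ℤ) i * (m.factorial : ℤ) = ((m + i).factorial : ℤ) := by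
  induction i with
  | zero => simp [ffall_zero]
  | succ i ih =>
      have h1 : ((m + (i+1) : ℕ) : ℤ) = ((m + i : ℕ) : ℤ) + 1 := by push_cast; ring
      rw [h1, ffall_succ_left]
      simp only [add_sub_cancel_right]
      rw [mul_assoc, ih]
      have : m + (i + 1) = (m + i) + 1 := by omega
      rw [this, Nat.factorial_succ]
      push_cast
      ring

lemma ffall_delta (y : ℤ) (m : ℕ) :
    ffall (y + 1) (m + 1) - ffall y (m + 1) = (m + 1 : ℤ) * ffall y m := by
  rw [ffall_succ_left, ffall_succ]
  simp only [add_sub_cancel_right]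
  ring

lemma ffall_add (b c : ℤ) (r : ℕ) :
    ffall (b + c) r =
      ∑ i ∈ Finset.range (r + 1), (r.choose i : ℤ) * ffall b i * ffall c (r - i) := by
  induction r with
  | zero => simp [ffall_zero]
  | succ r ih =>
      have key : ffall (b + c) (r + 1) =
          (∑ i ∈ Finset.range (r + 1), (r.choose i : ℤ) * ffall b (i + 1) * ffall c (r - i))
          + ∑ i ∈ Finset.range (r + 1), (r.choose i : ℤ) * ffall b i * ffall c ((r - i) + 1) := by
        rw [ffall_succ, ih, Finset.sum_mul, ← Finset.sum_add_distrib]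
        refine Finset.sum_congr rfl fun i hi => ?_
        have hir : i ≤ r := by simpa [Nat.lt_succ_iff] using hi
        have hsplit : b + c - (r : ℤ) = (b - i) + (c - ((r - i : ℕ) : ℤ)) := by
          have : ((r - i : ℕ) : ℤ) = (r : ℤ) - i := by omega
          rw [this]; ring
        rw [hsplit, mul_add, ffall_succ b i, ffall_succ c (r - i)]
        ring
      rw [key]
      -- now reconcile with RHS at r+1
      have hrhs : ∑ i ∈ Finset.range (r + 2), ((r+1).choose i : ℤ) * ffall b i * ffall c ((r+1) - i)
          = (∑ u ∈ Finset.range (r + 1), (r.choose u : ℤ) * ffall b (u + 1) * ffall c (r - u))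
            + ((∑ u ∈ Finset.range (r + 1), (r.choose (u+1) : ℤ) * ffall b (u + 1) * ffall c (r - u))
              + ffall c (r + 1)) := by
        rw [Finset.sum_range_succ' (fun i => ((r+1).choose i : ℤ) * ffall b i * ffall c ((r+1) - i)) (r+1)]
        have h0 : ((r+1).choose 0 : ℤ) * ffall b 0 * ffall c (r + 1 - 0) = ffall c (r+1) := by
          simp [ffall_zero]
        rw [h0]
        have hterm : ∀ u ∈ Finset.range (r+1),
            ((r+1).choose (u+1) : ℤ) * ffall b (u+1) * ffall c ((r+1) - (u+1))
            = (r.choose u : ℤ) * ffall b (u + 1) * ffall c (r - u)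
              + (r.choose (u+1) : ℤ) * ffall b (u + 1) * ffall c (r - u) := by
          intro u hu
          have : (r+1) - (u+1) = r - u := by omega
          rw [this, Nat.choose_succ_succ]
          push_cast
          ring
        rw [Finset.sum_congr rfl hterm, Finset.sum_add_distrib]
        ring
      rw [hrhs]
      congr 1
      -- remaining: second sum equals modified
      have hE : ∑ i ∈ Finset.range (r + 1), (r.choose i : ℤ) * ffall b i * ffall c ((r - i) + 1)
          = (∑ u ∈ Finset.range r, (r.choose (u+1) : ℤ) * ffall b (u+1) * ffall c ((r - (u+1)) + 1))
            + ffall c (r + 1) := by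
        rw [Finset.sum_range_succ' (fun i => (r.choose i : ℤ) * ffall b i * ffall c ((r - i) + 1)) r]
        simp [ffall_zero]
      have hB : ∑ u ∈ Finset.range (r + 1), (r.choose (u+1) : ℤ) * ffall b (u + 1) * ffall c (r - u)
          = ∑ u ∈ Finset.range r, (r.choose (u+1) : ℤ) * ffall b (u+1) * ffall c ((r - (u+1)) + 1) := by
        rw [Finset.sum_range_succ]
        simp only [Nat.choose_succ_self, Nat.cast_zero, zero_mul, add_zero]
        refine Finset.sum_congr rfl fun u hu => ?_
        have : r - u = (r - (u+1)) + 1 := by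
          have : u < r := Finset.mem_range.mp hu
          omega
        rw [this]
      rw [hE, hB]


/-- difference step for alternating binomial sums -/
lemma alt_step (d : ℕ) (f : ℕ → ℤ) :
    ∑ u ∈ Finset.range (d + 2), (-1 : ℤ) ^ (d + 1 + u) * ((d+1).choose u) * f u
    = ∑ u ∈ Finset.range (d + 1), (-1 : ℤ) ^ (d + u) * (d.choose u) * (f (u+1) - f u) := by
  have hB' : ∑ v ∈ Finset.range (d + 2), (-1 : ℤ) ^ (d + 1 + v) * (d.choose v) * f v
      = - ∑ v ∈ Finset.range (d + 1), (-1 : ℤ) ^ (d + v) * (d.choose v) * f v := by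
    rw [Finset.sum_range_succ]
    simp only [Nat.choose_succ_self, Nat.cast_zero, mul_zero, zero_mul, add_zero]
    rw [← Finset.sum_neg_distrib]
    refine Finset.sum_congr rfl fun v hv => ?_
    have : (-1 : ℤ) ^ (d + 1 + v) = -(-1 : ℤ) ^ (d + v) := by
      rw [show d + 1 + v = (d + v) + 1 by ring, pow_succ]; ring
    rw [this]; ring
  have hB'2 : ∑ v ∈ Finset.range (d + 2), (-1 : ℤ) ^ (d + 1 + v) * (d.choose v) * f v
      = (∑ u ∈ Finset.range (d + 1), (-1 : ℤ) ^ (d + u) * (d.choose (u+1)) * f (u+1))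
        + (-1 : ℤ) ^ (d + 1) * f 0 := by
    rw [Finset.sum_range_succ' (fun v => (-1 : ℤ) ^ (d + 1 + v) * (d.choose v) * f v) (d+1)]
    simp only [Nat.choose_zero_right, Nat.cast_one, mul_one, add_zero]
    congr 1
    refine Finset.sum_congr rfl fun u hu => ?_
    have : (-1 : ℤ) ^ (d + 1 + (u + 1)) = (-1 : ℤ) ^ (d + u) := by
      rw [show d + 1 + (u + 1) = (d + u) + 2 by ring, pow_add]; ring
    rw [this]
  -- expand LHS
  have hL : ∑ u ∈ Finset.range (d + 2), (-1 : ℤ) ^ (d + 1 + u) * ((d+1).choose u) * f u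
      = (∑ u ∈ Finset.range (d + 1), (-1 : ℤ) ^ (d + u) * (d.choose u) * f (u+1))
        + ((∑ u ∈ Finset.range (d + 1), (-1 : ℤ) ^ (d + u) * (d.choose (u+1)) * f (u+1))
          + (-1 : ℤ) ^ (d + 1) * f 0) := by
    rw [Finset.sum_range_succ' (fun u => (-1 : ℤ) ^ (d + 1 + u) * ((d+1).choose u) * f u) (d+1)]
    simp only [Nat.choose_zero_right, Nat.cast_one, mul_one, add_zero]
    rw [Finset.sum_congr rfl (fun u (hu : u ∈ Finset.range (d+1)) => by
      rw [Nat.choose_succ_succ,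
        show (-1 : ℤ) ^ (d + 1 + (u + 1)) = (-1 : ℤ) ^ (d + u) by
          rw [show d + 1 + (u + 1) = (d + u) + 2 by ring, pow_add]; ring]
      push_cast; ring :
      ∀ u ∈ Finset.range (d+1), (-1 : ℤ) ^ (d + 1 + (u+1)) * ((d+1).choose (u+1)) * f (u+1)
        = (-1 : ℤ) ^ (d + u) * (d.choose u) * f (u+1)
          + (-1 : ℤ) ^ (d + u) * (d.choose (u+1)) * f (u+1))]
    rw [Finset.sum_add_distrib]
    ring
  rw [hL, ← hB'2, hB']
  rw [Finset.sum_congr rfl (fun u (hu : u ∈ Finset.range (d+1)) => by ring :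
    ∀ u ∈ Finset.range (d+1), (-1 : ℤ) ^ (d + u) * (d.choose u) * (f (u+1) - f u)
      = (-1 : ℤ) ^ (d + u) * (d.choose u) * f (u+1) - (-1 : ℤ) ^ (d + u) * (d.choose u) * f u)]
  rw [Finset.sum_sub_distrib]
  ring

lemma alt_sum (d : ℕ) : ∀ (m : ℕ) (c : ℤ),
    ∑ u ∈ Finset.range (d + 1), (-1 : ℤ) ^ (d + u) * (d.choose u) * ffall ((u : ℤ) + c) m
    = ffall (m : ℤ) d * ffall c (m - d) := by
  induction d with
  | zero => intro m c; simp [ffall_zero]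
  | succ d ih =>
      intro m c
      rw [alt_step d (fun u => ffall ((u : ℤ) + c) m)]
      cases m with
      | zero =>
          simp only [ffall_zero, sub_self, mul_zero, Finset.sum_const_zero]
          rw [ffall_succ_left]
          simp
      | succ m =>
          have hterm : ∀ u : ℕ, ffall (((u+1 : ℕ) : ℤ) + c) (m+1) - ffall ((u : ℤ) + c) (m+1)
              = (m + 1 : ℤ) * ffall ((u : ℤ) + c) m := by
            intro u
            have : ((u + 1 : ℕ) : ℤ) + c = ((u : ℤ) + c) + 1 := by push_cast; ring
            rw [this, ffall_delta]
          rw [Finset.sum_congr rfl (fun u _ => by rw [hterm u] :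
            ∀ u ∈ Finset.range (d+1),
              (-1 : ℤ) ^ (d + u) * (d.choose u) *
                (ffall (((u:ℕ)+1 : ℕ) + c) (m+1) - ffall ((u : ℤ) + c) (m+1))
              = (-1 : ℤ) ^ (d + u) * (d.choose u) * ((m + 1 : ℤ) * ffall ((u : ℤ) + c) m))]
          have hfac : ∑ u ∈ Finset.range (d+1), (-1:ℤ)^(d+u) * (d.choose u) * (((m:ℤ)+1) * ffall ((u:ℤ)+c) m)
              = ((m:ℤ)+1) * ∑ u ∈ Finset.range (d+1), (-1:ℤ)^(d+u) * (d.choose u) * ffall ((u:ℤ)+c) m := by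
            rw [Finset.mul_sum]; exact Finset.sum_congr rfl fun u _ => by ring
          rw [hfac, ih m c]
          have h1 : ((m+1:ℕ):ℤ) = (m:ℤ)+1 := by push_cast; ring
          rw [h1, ffall_succ_left, add_sub_cancel_right, Nat.succ_sub_succ]
          ring

lemma key_int (s m : ℕ) (hm : m ≤ s) (j : ℤ) :
    ∑ r ∈ Finset.range (s + 1), (-1 : ℤ) ^ (s + r) * (s.choose r) * (r.choose m) *
      ffall ((r : ℤ) - j) m
    = (s.choose m) * (ffall (m : ℤ) (s - m) * ffall ((m : ℤ) - j) (m - (s - m))) := by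
  have hsplit : s + 1 = m + (s - m + 1) := by omega
  rw [hsplit, Finset.sum_range_add]
  have h1 : ∑ r ∈ Finset.range m, (-1 : ℤ) ^ (s + r) * (s.choose r) * (r.choose m) *
      ffall ((r : ℤ) - j) m = 0 := by
    refine Finset.sum_eq_zero fun r hr => ?_
    have : r.choose m = 0 := Nat.choose_eq_zero_of_lt (Finset.mem_range.mp hr)
    simp [this]
  rw [h1, zero_add]
  have h2 : ∀ u ∈ Finset.range (s - m + 1),
      (-1 : ℤ) ^ (s + (m + u)) * (s.choose (m + u)) * ((m + u).choose m) *
        ffall (((m + u : ℕ) : ℤ) - j) m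
      = (s.choose m) * ((-1 : ℤ) ^ ((s - m) + u) * ((s - m).choose u) *
          ffall ((u : ℤ) + ((m : ℤ) - j)) m) := by
    intro u hu
    have hu' : u ≤ s - m := by simpa [Nat.lt_succ_iff] using hu
    have hmu : m + u ≤ s := by omega
    have hc : (s.choose (m + u)) * ((m + u).choose m) = (s.choose m) * ((s - m).choose u) := by
      have := Nat.choose_mul (n := s) (k := m + u) (s := m) (by omega)
      simpa [Nat.add_sub_cancel_left] using this
    have hsgn : (-1 : ℤ) ^ (s + (m + u)) = (-1 : ℤ) ^ ((s - m) + u) := by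
      rw [show s + (m + u) = ((s - m) + u) + 2 * m by omega, pow_add, pow_mul]
      norm_num
    have harg : ((m + u : ℕ) : ℤ) - j = (u : ℤ) + ((m : ℤ) - j) := by push_cast; ring
    rw [harg, hsgn]
    have hc' : ((s.choose (m + u) : ℤ)) * (((m + u).choose m : ℤ))
        = ((s.choose m : ℤ)) * (((s - m).choose u : ℤ)) := by exact_mod_cast hc
    linear_combination ((-1 : ℤ) ^ ((s - m) + u) * ffall ((u : ℤ) + ((m : ℤ) - j)) m) * hc' 
  rw [Finset.sum_congr rfl h2, ← Finset.mul_sum, alt_sum (s - m) m ((m : ℤ) - j)]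

lemma choose_ffall (s k : ℕ) (hk : 2 * k ≤ s) :
    (s.choose (s - k) : ℤ) * ffall ((s : ℤ) - k) k * (k.factorial : ℤ)
      = ffall (s : ℤ) (2 * k) := by
  have hks : k ≤ s := by omega
  have h2 : ffall (s : ℤ) (2 * k) = ffall (s : ℤ) k * ffall ((s : ℤ) - k) k := by
    rw [show 2 * k = k + k by ring, ffall_add_exponent]
  have h3 : ffall ((s : ℤ)) k * ((s - k).factorial : ℤ) = (s.factorial : ℤ) := by
    have := ffall_mul_factorial (s - k) k
    rw [show (s - k) + k = s by omega] at this
    exact this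
  have h4 : (s.choose k : ℤ) * (k.factorial : ℤ) * ((s - k).factorial : ℤ)
      = (s.factorial : ℤ) := by
    exact_mod_cast congrArg (Nat.cast : ℕ → ℤ)
      (Nat.choose_mul_factorial_mul_factorial hks)
  have h5 : (s.choose k : ℤ) * (k.factorial : ℤ) = ffall (s : ℤ) k := by
    have hne : ((s - k).factorial : ℤ) ≠ 0 := by exact_mod_cast (Nat.factorial_pos _).ne'
    have := h4.trans h3.symm
    exact mul_right_cancel₀ hne this
  rw [Nat.choose_symm hks, h2, ← h5]
  ring

lemma star (ν x : ℝ) (hν : ν ≠ 0) (j : ℤ) (s : ℕ) :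
    ∑ r ∈ Finset.range (s + 1), (s.choose r : ℝ) * (-x) ^ (s - r) * (1 / ν ^ r) *
      (∑ i ∈ Finset.range (r + 1), (r.choose i : ℝ) * (ν * x) ^ i *
        (ffall ((r : ℤ) - j) (r - i) : ℝ))
    = ∑ k ∈ Finset.range (s / 2 + 1),
        x ^ k / ((k.factorial : ℝ) * ν ^ (s - k)) *
          (ffall (s : ℤ) (2 * k) : ℝ) * (ffall ((s : ℤ) - k - j) (s - 2 * k) : ℝ) := by
  set v : ℕ → ℕ → ℝ := fun r m => (-1 : ℝ) ^ (s + r) * (s.choose r : ℝ) * (r.choose m : ℝ) *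
    (ffall ((r : ℤ) - j) m : ℝ) * (x ^ (s - m) * (1 / ν ^ m)) with hv
  have step1 : ∀ r ∈ Finset.range (s + 1),
      (s.choose r : ℝ) * (-x) ^ (s - r) * (1 / ν ^ r) *
        (∑ i ∈ Finset.range (r + 1), (r.choose i : ℝ) * (ν * x) ^ i *
          (ffall ((r : ℤ) - j) (r - i) : ℝ))
      = ∑ m ∈ Finset.range (s + 1), v r m := by
    intro r hr
    have hrs : r ≤ s := by simpa [Nat.lt_succ_iff] using hr
    have hrefl : ∑ i ∈ Finset.range (r + 1), (r.choose i : ℝ) * (ν * x) ^ i *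
          (ffall ((r : ℤ) - j) (r - i) : ℝ)
        = ∑ m ∈ Finset.range (r + 1), (r.choose (r - m) : ℝ) * (ν * x) ^ (r - m) *
          (ffall ((r : ℤ) - j) (r - (r - m)) : ℝ) := by
      rw [← Finset.sum_range_reflect]
      refine Finset.sum_congr rfl fun m hm => ?_
      congr 2 <;> omega
    rw [hrefl, Finset.mul_sum]
    have hsub : ∑ m ∈ Finset.range (r + 1), v r m = ∑ m ∈ Finset.range (s + 1), v r m := by
      refine Finset.sum_subset (Finset.range_subset_range.mpr (by omega)) fun m _ hm => ?_
      have : r < m := by simpa [Finset.mem_range, Nat.lt_succ_iff] using hm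
      simp [hv, Nat.choose_eq_zero_of_lt this]
    rw [← hsub]
    refine Finset.sum_congr rfl fun m hm => ?_
    have hmr : m ≤ r := by simpa [Nat.lt_succ_iff] using hm
    rw [Nat.choose_symm hmr, show r - (r - m) = m by omega]
    have hsign : (-x) ^ (s - r) = (-1 : ℝ) ^ (s + r) * x ^ (s - r) := by
      rw [neg_pow, show s + r = (s - r) + 2 * r by omega, pow_add, pow_mul]
      norm_num
    have hx : x ^ (s - m) = x ^ (s - r) * x ^ (r - m) := by
      rw [← pow_add]; congr 1; omega
    have hnu : ν ^ r = ν ^ m * ν ^ (r - m) := by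
      rw [← pow_add]; congr 1; omega
    rw [hv]
    simp only
    rw [hsign, mul_pow, hx, hnu]
    have hνm : ν ^ m ≠ 0 := pow_ne_zero _ hν
    have hνrm : ν ^ (r - m) ≠ 0 := pow_ne_zero _ hν
    field_simp
  rw [Finset.sum_congr rfl step1, Finset.sum_comm]
  have step4 : ∀ m ∈ Finset.range (s + 1),
      ∑ r ∈ Finset.range (s + 1), v r m
      = ((s.choose m : ℝ) * ((ffall (m : ℤ) (s - m) : ℝ) *
          (ffall ((m : ℤ) - j) (m - (s - m)) : ℝ))) * (x ^ (s - m) * (1 / ν ^ m)) := by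
    intro m hm
    have hms : m ≤ s := by simpa [Nat.lt_succ_iff] using hm
    have : ∑ r ∈ Finset.range (s + 1), v r m
        = (∑ r ∈ Finset.range (s + 1), (-1 : ℝ) ^ (s + r) * (s.choose r : ℝ) *
            (r.choose m : ℝ) * (ffall ((r : ℤ) - j) m : ℝ)) * (x ^ (s - m) * (1 / ν ^ m)) := by
      rw [Finset.sum_mul]
    rw [this]
    congr 1
    have : (∑ r ∈ Finset.range (s + 1), (-1 : ℝ) ^ (s + r) * (s.choose r : ℝ) *
            (r.choose m : ℝ) * (ffall ((r : ℤ) - j) m : ℝ))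
        = ((∑ r ∈ Finset.range (s + 1), (-1 : ℤ) ^ (s + r) * (s.choose r) * (r.choose m) *
            ffall ((r : ℤ) - j) m : ℤ) : ℝ) := by
      push_cast
      rfl
    rw [this, key_int s m hms j]
    push_cast
    rfl
  rw [Finset.sum_congr rfl step4]
  -- reflect m ↦ s - k
  rw [← Finset.sum_range_reflect]
  simp only [Nat.add_sub_cancel]
  have hsub2 : ∑ k ∈ Finset.range (s / 2 + 1),
      ((s.choose (s - k) : ℝ) * ((ffall ((s - k : ℕ) : ℤ) (s - (s - k)) : ℝ) *
          (ffall (((s - k : ℕ) : ℤ) - j) ((s - k) - (s - (s - k))) : ℝ))) *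
          (x ^ (s - (s - k)) * (1 / ν ^ (s - k)))
      = ∑ k ∈ Finset.range (s + 1),
      ((s.choose (s - k) : ℝ) * ((ffall ((s - k : ℕ) : ℤ) (s - (s - k)) : ℝ) *
          (ffall (((s - k : ℕ) : ℤ) - j) ((s - k) - (s - (s - k))) : ℝ))) *
          (x ^ (s - (s - k)) * (1 / ν ^ (s - k))) := by
    refine Finset.sum_subset (Finset.range_subset_range.mpr (by omega)) fun k hk hk2 => ?_
    have h1 : s / 2 < k := by simpa [Finset.mem_range, Nat.lt_succ_iff] using hk2
    have h2 : k ≤ s := by simpa [Finset.mem_range, Nat.lt_succ_iff] using hk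
    have h5 : ffall ((s - k : ℕ) : ℤ) (s - (s - k)) = 0 := by
      rw [show s - (s - k) = k by omega]
      refine ffall_eq_zero (by positivity) ?_
      exact_mod_cast (by omega : s - k < k)
    simp [h5]
  rw [← hsub2]
  refine Finset.sum_congr rfl fun k hk => ?_
  have hk2 : k ≤ s / 2 := by simpa [Nat.lt_succ_iff] using hk
  have h2k : 2 * k ≤ s := by omega
  have e2 : s - (s - k) = k := by omega
  have e3 : (s - k) - (s - (s - k)) = s - 2 * k := by omega
  have e4 : ((s - k : ℕ) : ℤ) = (s : ℤ) - k := by omega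
  rw [e3, e2, e4]
  have hkfac : (k.factorial : ℝ) ≠ 0 := by exact_mod_cast (Nat.factorial_pos k).ne'
  have key : ((s.choose (s - k) : ℕ) : ℝ) * ((ffall ((s : ℤ) - k) k : ℤ) : ℝ)
      = ((ffall (s : ℤ) (2 * k) : ℤ) : ℝ) / (k.factorial : ℝ) := by
    rw [eq_div_iff hkfac]
    exact_mod_cast congrArg (Int.cast : ℤ → ℝ) (choose_ffall s k h2k)
  have hνsk : ν ^ (s - k) ≠ 0 := pow_ne_zero _ hν
  calc ((s.choose (s - k) : ℕ) : ℝ) * (((ffall ((s : ℤ) - k) k : ℤ) : ℝ) *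
        ((ffall ((s : ℤ) - k - j) (s - 2 * k) : ℤ) : ℝ)) * (x ^ k * (1 / ν ^ (s - k)))
      = (((s.choose (s - k) : ℕ) : ℝ) * ((ffall ((s : ℤ) - k) k : ℤ) : ℝ)) *
        (((ffall ((s : ℤ) - k - j) (s - 2 * k) : ℤ) : ℝ) * (x ^ k * (1 / ν ^ (s - k)))) := by
        ring
    _ = (((ffall (s : ℤ) (2 * k) : ℤ) : ℝ) / (k.factorial : ℝ)) *
        (((ffall ((s : ℤ) - k - j) (s - 2 * k) : ℤ) : ℝ) * (x ^ k * (1 / ν ^ (s - k)))) := by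
        rw [key]
    _ = x ^ k / ((k.factorial : ℝ) * ν ^ (s - k)) * ((ffall (s : ℤ) (2 * k) : ℤ) : ℝ) *
        ((ffall ((s : ℤ) - k - j) (s - 2 * k) : ℤ) : ℝ) := by
        field_simp

lemma integrableOn_exp_mul_pow {b : ℝ} (hb : 0 < b) (p : ℕ) :
    IntegrableOn (fun t : ℝ => Real.exp (-b * t) * t ^ p) (Set.Ioi 0) := by
  have h := integrableOn_rpow_mul_exp_neg_mul_rpow (p := 1) (s := (p : ℝ))
    (by exact_mod_cast neg_one_lt_zero.trans_le (Nat.cast_nonneg p) : (-1 : ℝ) < (p : ℝ)) zero_lt_one hb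
  refine (h.congr_fun (fun t ht => ?_) measurableSet_Ioi)
  have ht' : (0 : ℝ) < t := ht
  beta_reduce
  rw [Real.rpow_one, Real.rpow_natCast, mul_comm]

lemma integral_exp_mul_pow {b : ℝ} (hb : 0 < b) (p : ℕ) :
    ∫ t in Set.Ioi (0 : ℝ), Real.exp (-b * t) * t ^ p
      = (p.factorial : ℝ) / b ^ (p + 1) := by
  have h := Real.integral_rpow_mul_exp_neg_mul_Ioi (a := (p : ℝ) + 1) (r := b)
    (by positivity) hb
  have hcongr : ∫ t in Set.Ioi (0 : ℝ), t ^ ((p : ℝ) + 1 - 1) * Real.exp (-(b * t))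
      = ∫ t in Set.Ioi (0 : ℝ), Real.exp (-b * t) * t ^ p := by
    refine setIntegral_congr_fun measurableSet_Ioi fun t ht => ?_
    have ht' : (0 : ℝ) < t := ht
    rw [show (p : ℝ) + 1 - 1 = (p : ℝ) by ring, Real.rpow_natCast, neg_mul, mul_comm]
  rw [← hcongr, h]
  have hg : Real.Gamma ((p : ℝ) + 1) = (p.factorial : ℝ) := Real.Gamma_nat_eq_factorial p
  rw [hg, show ((p : ℝ) + 1) = ((p + 1 : ℕ) : ℝ) by push_cast; ring, Real.rpow_natCast, div_pow,
    one_pow]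
  rw [div_mul_eq_mul_div, one_mul]

lemma integral_szasz_pow (n : ℕ) (hn : 0 < n) (x : ℝ) (m s : ℕ) :
    (n : ℝ) * ∫ t in Set.Ioi (0 : ℝ), szasz n m t * (t - x) ^ s
    = ∑ r ∈ Finset.range (s + 1), (s.choose r : ℝ) * (-x) ^ (s - r) * (1 / (n : ℝ) ^ r) *
        ((ffall ((m : ℤ) + r) r : ℤ) : ℝ) := by
  have hnR : (0 : ℝ) < n := by exact_mod_cast hn
  have hn0 : (n : ℝ) ≠ 0 := hnR.ne'
  have hm0 : (m.factorial : ℝ) ≠ 0 := by exact_mod_cast (Nat.factorial_pos m).ne'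
  have hfun : ∀ t : ℝ, szasz n m t * (t - x) ^ s
      = ∑ r ∈ Finset.range (s + 1),
          ((n : ℝ) ^ m / m.factorial * ((-x) ^ (s - r) * (s.choose r : ℝ))) *
            (Real.exp (-(n : ℝ) * t) * t ^ (m + r)) := by
    intro t
    rw [sub_eq_add_neg, add_pow]
    unfold szasz
    rw [Finset.mul_sum]
    refine Finset.sum_congr rfl fun r hr => ?_
    rw [mul_pow, pow_add]
    ring
  have hintg : ∫ t in Set.Ioi (0 : ℝ), szasz n m t * (t - x) ^ s
      = ∑ r ∈ Finset.range (s + 1),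
          ((n : ℝ) ^ m / m.factorial * ((-x) ^ (s - r) * (s.choose r : ℝ))) *
            ((m + r).factorial / (n : ℝ) ^ (m + r + 1)) := by
    simp_rw [hfun]
    rw [integral_finset_sum _ (fun r _ =>
      ((integrableOn_exp_mul_pow hnR (m + r)).const_mul _))]
    refine Finset.sum_congr rfl fun r hr => ?_
    rw [MeasureTheory.integral_const_mul, integral_exp_mul_pow hnR]
  rw [hintg, Finset.mul_sum]
  refine Finset.sum_congr rfl fun r hr => ?_
  have hff : ((m + r).factorial : ℝ) = ((ffall ((m : ℤ) + r) r : ℤ) : ℝ) * m.factorial := by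
    have := ffall_mul_factorial m r
    have h2 : ((m + r : ℕ) : ℤ) = (m : ℤ) + r := by push_cast; ring
    rw [h2] at this
    exact_mod_cast this.symm
  rw [hff, show (n : ℝ) ^ (m + r + 1) = (n : ℝ) ^ m * (n : ℝ) ^ r * n by
    rw [pow_add, pow_add, pow_one]]
  field_simp

lemma hasSum_szasz_ffall (n : ℕ) (x : ℝ) (i : ℕ) :
    HasSum (fun k : ℕ => szasz n k x * ((ffall (k : ℤ) i : ℤ) : ℝ)) (((n : ℝ) * x) ^ i) := by
  set y : ℝ := (n : ℝ) * x with hy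
  have hexp : HasSum (fun m : ℕ => y ^ m / m.factorial) (Real.exp y) := by
    rw [Real.exp_eq_exp_ℝ]
    exact NormedSpace.expSeries_div_hasSum_exp y
  have h1 : HasSum (fun m : ℕ => Real.exp (-y) * y ^ i * (y ^ m / m.factorial))
      (Real.exp (-y) * y ^ i * Real.exp y) := hexp.mul_left _
  have hval : Real.exp (-y) * y ^ i * Real.exp y = y ^ i := by
    rw [show Real.exp (-y) * y ^ i * Real.exp y = Real.exp (-y) * Real.exp y * y ^ i by ring,
      ← Real.exp_add]
    simp
  rw [hval] at h1
  have h2 : ∀ m : ℕ, szasz n (m + i) x * ((ffall ((m + i : ℕ) : ℤ) i : ℤ) : ℝ)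
      = Real.exp (-y) * y ^ i * (y ^ m / m.factorial) := by
    intro m
    unfold szasz
    have hff : ((ffall ((m + i : ℕ) : ℤ) i : ℤ) : ℝ) * (m.factorial : ℝ)
        = ((m + i).factorial : ℝ) := by exact_mod_cast ffall_mul_factorial m i
    have hm0 : (m.factorial : ℝ) ≠ 0 := by exact_mod_cast (Nat.factorial_pos m).ne'
    have hmi0 : ((m + i).factorial : ℝ) ≠ 0 := by
      exact_mod_cast (Nat.factorial_pos (m + i)).ne'
    rw [show -(n : ℝ) * x = -y by rw [hy]; ring, ← hy]
    rw [div_mul_eq_mul_div, div_eq_iff hmi0, ← hff, pow_add]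
    field_simp
  have h3 : HasSum (fun m : ℕ => szasz n (m + i) x * ((ffall ((m + i : ℕ) : ℤ) i : ℤ) : ℝ))
      (y ^ i) := by
    rw [show (fun m : ℕ => szasz n (m + i) x * ((ffall ((m + i : ℕ) : ℤ) i : ℤ) : ℝ))
      = fun m : ℕ => Real.exp (-y) * y ^ i * (y ^ m / m.factorial) from funext h2]
    exact h1
  have h4 := (hasSum_nat_add_iff (f := fun k : ℕ => szasz n k x * ((ffall (k : ℤ) i : ℤ) : ℝ)) i).mp h3
  have h5 : ∑ u ∈ Finset.range i, szasz n u x * ((ffall (u : ℤ) i : ℤ) : ℝ) = 0 := by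
    refine Finset.sum_eq_zero fun u hu => ?_
    have : ffall (u : ℤ) i = 0 :=
      ffall_eq_zero (by positivity) (by exact_mod_cast Finset.mem_range.mp hu)
    simp [this]
  rw [h5, add_zero] at h4
  exact h4

lemma hasSum_szasz_ffall_shift (n : ℕ) (x : ℝ) (c : ℤ) (r : ℕ) :
    HasSum (fun k : ℕ => szasz n k x * ((ffall ((k : ℤ) + c) r : ℤ) : ℝ))
      (∑ i ∈ Finset.range (r + 1),
        (r.choose i : ℝ) * ((n : ℝ) * x) ^ i * ((ffall c (r - i) : ℤ) : ℝ)) := by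
  have hpt : ∀ k : ℕ, szasz n k x * ((ffall ((k : ℤ) + c) r : ℤ) : ℝ)
      = ∑ i ∈ Finset.range (r + 1),
          ((r.choose i : ℝ) * ((ffall c (r - i) : ℤ) : ℝ)) *
            (szasz n k x * ((ffall (k : ℤ) i : ℤ) : ℝ)) := by
    intro k
    rw [ffall_add (k : ℤ) c r]
    push_cast
    rw [Finset.mul_sum]
    refine Finset.sum_congr rfl fun i hi => by ring
  have h := hasSum_sum (s := Finset.range (r + 1))
    (f := fun i (k : ℕ) => ((r.choose i : ℝ) * ((ffall c (r - i) : ℤ) : ℝ)) *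
      (szasz n k x * ((ffall (k : ℤ) i : ℤ) : ℝ)))
    (a := fun i => ((r.choose i : ℝ) * ((ffall c (r - i) : ℤ) : ℝ)) * ((n : ℝ) * x) ^ i)
    (fun i _ => (hasSum_szasz_ffall n x i).mul_left _)
  rw [show (fun k : ℕ => szasz n k x * ((ffall ((k : ℤ) + c) r : ℤ) : ℝ))
    = fun k : ℕ => ∑ i ∈ Finset.range (r + 1),
        ((r.choose i : ℝ) * ((ffall c (r - i) : ℤ) : ℝ)) *
          (szasz n k x * ((ffall (k : ℤ) i : ℤ) : ℝ)) from funext hpt]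
  convert h using 1
  refine Finset.sum_congr rfl fun i hi => by ring


end SA
open SA

/-- the central moments of the operators `S_{n,j}`. -/
theorem stmt_4 (j : ℤ) (n : ℕ) (hn : 1 ≤ n) (x : ℝ) (hx : 0 ≤ x) (s : ℕ) (hs : 1 ≤ s) :
    Sop n j (fun t => (t - x) ^ s) x =
      (∑ k ∈ Finset.range (s / 2 + 1),
        x ^ k / ((Nat.factorial k : ℝ) * (n : ℝ) ^ (s - k)) *
          (ffall (s : ℤ) (2 * k) : ℝ) * (ffall ((s : ℤ) - k - j) (s - 2 * k) : ℝ))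
      - Real.exp (-(n : ℝ) * x) *
          ∑ r ∈ Finset.Icc 1 s,
            (s.choose r : ℝ) * (-x) ^ (s - r) * (1 / (n : ℝ) ^ r) *
              ∑ k ∈ Finset.range ((j - r).toNat),
                (((n : ℝ) * x) ^ k / (Nat.factorial k)) * (ffall ((k : ℤ) + r - j) r : ℝ) := by
  have hn' : 0 < n := hn
  have hnne : ((n : ℝ)) ≠ 0 := by positivity
  set G : ℕ → ℝ := fun k =>
    ∑ r ∈ Finset.range (s + 1), (s.choose r : ℝ) * (-x) ^ (s - r) * (1 / (n : ℝ) ^ r) *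
      ((ffall ((k : ℤ) + r - j) r : ℤ) : ℝ) with hG
  -- Claim 1 : value of each inner integral
  have claim1 : ∀ k : ℕ,
      ((n : ℝ) * ∫ t in Set.Ioi (0 : ℝ), szaszZ n ((k : ℤ) - j) t * (t - x) ^ s)
      = if j ≤ (k : ℤ) then G k else 0 := by
    intro k
    by_cases hkj : j ≤ (k : ℤ)
    · rw [if_pos hkj]
      have h0 : 0 ≤ (k : ℤ) - j := by omega
      have hfun : ∀ t : ℝ, szaszZ n ((k : ℤ) - j) t * (t - x) ^ s
          = szasz n ((k : ℤ) - j).toNat t * (t - x) ^ s := fun t => by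
        rw [szaszZ, if_pos h0]
      rw [show (fun t : ℝ => szaszZ n ((k : ℤ) - j) t * (t - x) ^ s)
        = fun t : ℝ => szasz n ((k : ℤ) - j).toNat t * (t - x) ^ s from funext hfun]
      rw [integral_szasz_pow n hn' x (((k : ℤ) - j).toNat) s, hG]
      refine Finset.sum_congr rfl fun r hr => ?_
      congr 2
      rw [Int.toNat_of_nonneg h0]
      ring
    · rw [if_neg hkj]
      have hfun : ∀ t : ℝ, szaszZ n ((k : ℤ) - j) t * (t - x) ^ s = 0 := fun t => by
        rw [szaszZ, if_neg (by omega), zero_mul]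
      rw [show (fun t : ℝ => szaszZ n ((k : ℤ) - j) t * (t - x) ^ s)
        = fun _ : ℝ => (0 : ℝ) from funext hfun]
      simp
  -- H1 : the full weighted series
  have H1 : HasSum (fun k : ℕ => szasz n k x * G k)
      (∑ r ∈ Finset.range (s + 1),
        (s.choose r : ℝ) * (-x) ^ (s - r) * (1 / (n : ℝ) ^ r) *
          (∑ i ∈ Finset.range (r + 1), (r.choose i : ℝ) * ((n : ℝ) * x) ^ i *
            ((ffall ((r : ℤ) - j) (r - i) : ℤ) : ℝ))) := by
    have hpt : ∀ k : ℕ, szasz n k x * G k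
        = ∑ r ∈ Finset.range (s + 1),
            ((s.choose r : ℝ) * (-x) ^ (s - r) * (1 / (n : ℝ) ^ r)) *
              (szasz n k x * ((ffall ((k : ℤ) + ((r : ℤ) - j)) r : ℤ) : ℝ)) := by
      intro k
      rw [hG, Finset.mul_sum]
      refine Finset.sum_congr rfl fun r hr => ?_
      rw [show (k : ℤ) + r - j = (k : ℤ) + ((r : ℤ) - j) from by ring]
      ring
    rw [show (fun k : ℕ => szasz n k x * G k)
      = fun k : ℕ => ∑ r ∈ Finset.range (s + 1),
          ((s.choose r : ℝ) * (-x) ^ (s - r) * (1 / (n : ℝ) ^ r)) *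
            (szasz n k x * ((ffall ((k : ℤ) + ((r : ℤ) - j)) r : ℤ) : ℝ)) from funext hpt]
    exact hasSum_sum fun r _ => (hasSum_szasz_ffall_shift n x ((r : ℤ) - j) r).mul_left _
  -- H2 : the finitely supported correction series
  have H2 : HasSum (fun k : ℕ => if (k : ℤ) < j then szasz n k x * G k else 0)
      (∑ k ∈ Finset.range j.toNat, szasz n k x * G k) := by
    have hsupp : ∀ k ∉ Finset.range j.toNat,
        (if (k : ℤ) < j then szasz n k x * G k else 0) = 0 := by
      intro k hk
      rw [if_neg]
      intro hlt
      exact hk (Finset.mem_range.mpr (Int.lt_toNat.mpr hlt))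
    have h : HasSum (fun k : ℕ => if (k : ℤ) < j then szasz n k x * G k else 0) _ :=
      hasSum_sum_of_ne_finset_zero hsupp
    have heq : ∑ k ∈ Finset.range j.toNat, (if (k : ℤ) < j then szasz n k x * G k else 0)
        = ∑ k ∈ Finset.range j.toNat, szasz n k x * G k :=
      Finset.sum_congr rfl fun k hk =>
        if_pos (Int.lt_toNat.mp (Finset.mem_range.mp hk))
    rw [heq] at h
    exact h
  -- pointwise decomposition
  have hpoint : ∀ k : ℕ,
      szasz n k x * ((n : ℝ) * ∫ t in Set.Ioi (0 : ℝ), szaszZ n ((k : ℤ) - j) t * (t - x) ^ s)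
      = szasz n k x * G k - (if (k : ℤ) < j then szasz n k x * G k else 0) := by
    intro k
    rw [claim1 k]
    by_cases hkj : j ≤ (k : ℤ)
    · rw [if_pos hkj, if_neg (by omega), sub_zero]
    · rw [if_neg hkj, if_pos (by omega), mul_zero, sub_self]
  -- assemble the operator value
  have hSop : Sop n j (fun t => (t - x) ^ s) x
      = (-x) ^ s * ∑ k ∈ Finset.range j.toNat, szasz n k x
        + ((∑ r ∈ Finset.range (s + 1),
            (s.choose r : ℝ) * (-x) ^ (s - r) * (1 / (n : ℝ) ^ r) *
              (∑ i ∈ Finset.range (r + 1), (r.choose i : ℝ) * ((n : ℝ) * x) ^ i *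
                ((ffall ((r : ℤ) - j) (r - i) : ℤ) : ℝ)))
          - ∑ k ∈ Finset.range j.toNat, szasz n k x * G k) := by
    rw [Sop, zero_sub]
    congr 1
    rw [tsum_congr hpoint]
    exact (H1.sub H2).tsum_eq
  rw [hSop]
  -- split G into its r = 0 part and the rest
  have hGsplit : ∀ k : ℕ, G k = (-x) ^ s
      + ∑ r ∈ Finset.Icc 1 s, (s.choose r : ℝ) * (-x) ^ (s - r) * (1 / (n : ℝ) ^ r) *
          ((ffall ((k : ℤ) + r - j) r : ℤ) : ℝ) := by
    intro k
    simp only [hG]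
    rw [Finset.range_eq_Ico, Finset.sum_eq_sum_Ico_succ_bot (by omega : 0 < s + 1),
      Finset.Ico_add_one_right_eq_Icc]
    congr 1
    simp [ffall_zero]
  have hQ : ∑ k ∈ Finset.range j.toNat, szasz n k x * G k
      = (-x) ^ s * ∑ k ∈ Finset.range j.toNat, szasz n k x
        + ∑ k ∈ Finset.range j.toNat, szasz n k x *
            ∑ r ∈ Finset.Icc 1 s, (s.choose r : ℝ) * (-x) ^ (s - r) * (1 / (n : ℝ) ^ r) *
              ((ffall ((k : ℤ) + r - j) r : ℤ) : ℝ) := by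
    rw [Finset.mul_sum, ← Finset.sum_add_distrib]
    refine Finset.sum_congr rfl fun k hk => ?_
    rw [hGsplit k]
    ring
  rw [hQ]
  -- the subtracted part equals the stated second sum
  have hQ' : ∑ k ∈ Finset.range j.toNat, szasz n k x *
        ∑ r ∈ Finset.Icc 1 s, (s.choose r : ℝ) * (-x) ^ (s - r) * (1 / (n : ℝ) ^ r) *
          ((ffall ((k : ℤ) + r - j) r : ℤ) : ℝ)
      = Real.exp (-(n : ℝ) * x) *
          ∑ r ∈ Finset.Icc 1 s,
            (s.choose r : ℝ) * (-x) ^ (s - r) * (1 / (n : ℝ) ^ r) *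
              ∑ k ∈ Finset.range ((j - r).toNat),
                (((n : ℝ) * x) ^ k / (Nat.factorial k)) * (ffall ((k : ℤ) + r - j) r : ℝ) := by
    rw [Finset.mul_sum]
    have hinner : ∀ r ∈ Finset.Icc 1 s,
        Real.exp (-(n : ℝ) * x) * ((s.choose r : ℝ) * (-x) ^ (s - r) * (1 / (n : ℝ) ^ r) *
          ∑ k ∈ Finset.range ((j - r).toNat),
            (((n : ℝ) * x) ^ k / (Nat.factorial k)) * (ffall ((k : ℤ) + r - j) r : ℝ))
        = ∑ k ∈ Finset.range j.toNat,
            ((s.choose r : ℝ) * (-x) ^ (s - r) * (1 / (n : ℝ) ^ r)) *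
              (szasz n k x * ((ffall ((k : ℤ) + r - j) r : ℤ) : ℝ)) := by
      intro r hr
      have hr1 : 1 ≤ r := (Finset.mem_Icc.mp hr).1
      have hext : ∑ k ∈ Finset.range ((j - r).toNat),
            (((n : ℝ) * x) ^ k / (Nat.factorial k)) * (ffall ((k : ℤ) + r - j) r : ℝ)
          = ∑ k ∈ Finset.range j.toNat,
            (((n : ℝ) * x) ^ k / (Nat.factorial k)) * (ffall ((k : ℤ) + r - j) r : ℝ) := by
      -- extend the summation range; the extra terms vanish
        refine Finset.sum_subset ?_ ?_
        · exact Finset.range_subset_range.mpr (Int.toNat_le_toNat (by omega))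
        · intro k hk hk2
          have h1 : (k : ℤ) < j := Int.lt_toNat.mp (Finset.mem_range.mp hk)
          have h2 : (j - r : ℤ) ≤ k := by
            have := Int.self_le_toNat (j - r)
            have h3 : ((j - r).toNat : ℤ) ≤ (k : ℤ) := by
              exact_mod_cast Nat.le_of_not_lt fun hcon => hk2 (Finset.mem_range.mpr hcon)
            omega
          have : ffall ((k : ℤ) + r - j) r = 0 :=
            ffall_eq_zero (by omega) (by omega)
          simp [this]
      rw [hext, Finset.mul_sum, Finset.mul_sum]
      refine Finset.sum_congr rfl fun k hk => ?_
      rw [szasz]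
      ring
    rw [Finset.sum_congr rfl hinner, Finset.sum_comm]
    refine Finset.sum_congr rfl fun k hk => ?_
    rw [Finset.mul_sum]
    exact Finset.sum_congr rfl fun r _ => by ring
  rw [hQ']
  -- the main series equals the stated first sum (the ★ identity)
  rw [star (n : ℝ) x hnne j s]
  ring
end

section
/- Let j ∈ ℤ, s ∈ ℕ with s ≥ 1, n ≥ 1 an integer, and for x ≥ 0 define M_{n,j,s,2}(x) := −e^{-nx} ∑_{r=1}^{s} C(s,r)(-x)^{s-r} n^{-r} ∑_{k=0}^{j-1-r} ((nx)^k/k!) · (k+r-j)↓r. Then: (i) if j ≥ 2, (−1)^{s+1} M_{n,j,s,2}(x) ≥ 0 for all x ≥ 0; (ii) |M_{n,j,s,2}(x)| ≤ K_{s,j}/n^s for all x ≥ 0, where K_{s,j} := sup_{t ≥ 0} e^{-t} ∑_{r=1}^{s} C(s,r) t^{s-r} ∑_{k=0}^{j-1-r} (t^k/k!) · (j-1-k)↓r is finite; and (iii) K_{s,j} = 0 if j ≤ 1. -/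
open MeasureTheory Real Filter

/-- The remainder term `M_{n,j,s,2}(x)` of the central moments. -/
noncomputable def Mnjs2 (n : ℕ) (j : ℤ) (s : ℕ) (x : ℝ) : ℝ :=
  -(Real.exp (-(n : ℝ) * x) *
    ∑ r ∈ Finset.Icc 1 s,
      (s.choose r : ℝ) * (-x) ^ (s - r) * (1 / (n : ℝ) ^ r) *
        ∑ k ∈ Finset.range ((j - r).toNat),
          (((n : ℝ) * x) ^ k / (Nat.factorial k)) * (ffall ((k : ℤ) + r - j) r : ℝ))

/-- The function whose supremum over `t ≥ 0` defines `K_{s,j}`. -/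
noncomputable def gKsj (j : ℤ) (s : ℕ) (t : ℝ) : ℝ :=
  Real.exp (-t) *
    ∑ r ∈ Finset.Icc 1 s,
      (s.choose r : ℝ) * t ^ (s - r) *
        ∑ k ∈ Finset.range ((j - r).toNat),
          (t ^ k / (Nat.factorial k)) * (ffall (j - 1 - k) r : ℝ)

lemma pow_div_fac_le_exp (x : ℝ) (hx : 0 ≤ x) (m : ℕ) : x ^ m / m.factorial ≤ Real.exp x := by
  calc x ^ m / m.factorial ≤ ∑ i ∈ Finset.range (m+1), x ^ i / i.factorial := by
        refine Finset.single_le_sum (f := fun i => x ^ i / (i.factorial : ℝ)) ?_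
          (Finset.self_mem_range_succ m)
        intro i _; positivity
    _ ≤ Real.exp x := Real.sum_le_exp_of_nonneg hx _

lemma ffall_reflect (a : ℤ) (r : ℕ) : ffall a r = (-1)^r * ffall ((r:ℤ) - 1 - a) r := by
  unfold ffall
  rw [← Finset.prod_range_reflect (fun i => ((r:ℤ) - 1 - a - i)) r]
  calc ∏ i ∈ Finset.range r, (a - i)
      = ∏ i ∈ Finset.range r, (-1) * ((r:ℤ) - 1 - a - ((r - 1 - i : ℕ) : ℤ)) := by
        apply Finset.prod_congr rfl
        intro i hi
        rw [Finset.mem_range] at hi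
        have : ((r - 1 - i : ℕ) : ℤ) = (r:ℤ) - 1 - i := by omega
        rw [this]; ring
    _ = (-1)^r * ∏ j ∈ Finset.range r, ((r:ℤ) - 1 - a - ((r - 1 - j : ℕ) : ℤ)) := by
        rw [Finset.prod_mul_distrib, Finset.prod_const, Finset.card_range]

lemma ffall_nonneg (a : ℤ) (r : ℕ) (h : (r:ℤ) ≤ a + 1) : 0 ≤ ffall a r := by
  apply Finset.prod_nonneg
  intro i hi
  rw [Finset.mem_range] at hi
  omega

lemma ffall_inner_nonneg (j : ℤ) (r k : ℕ) (hk : k ∈ Finset.range ((j - r).toNat)) :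
    (0:ℝ) ≤ (ffall (j - 1 - k) r : ℝ) := by
  rw [Finset.mem_range] at hk
  have hk' : (k:ℤ) < j - r := by
    have := Int.lt_toNat.mp hk
    omega
  exact_mod_cast ffall_nonneg _ _ (by omega)

lemma key_eq (n : ℕ) (hn : 1 ≤ n) (j : ℤ) (s : ℕ) (x : ℝ) :
    Mnjs2 n j s x = (-1:ℝ)^(s+1) * (gKsj j s ((n:ℝ)*x) / (n:ℝ)^s) := by
  have hn0 : (n:ℝ) ≠ 0 := by
    have : (1:ℝ) ≤ (n:ℝ) := by exact_mod_cast hn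
    linarith
  unfold Mnjs2 gKsj
  rw [show -((n:ℝ)*x) = -(n:ℝ)*x from (neg_mul _ _).symm]
  have hsum : ∀ r ∈ Finset.Icc 1 s,
      (s.choose r : ℝ) * (-x) ^ (s - r) * (1 / (n : ℝ) ^ r) *
        ∑ k ∈ Finset.range ((j - r).toNat),
          (((n : ℝ) * x) ^ k / (Nat.factorial k)) * (ffall ((k : ℤ) + r - j) r : ℝ)
      = (-1:ℝ)^s * ((s.choose r : ℝ) * ((n:ℝ)*x) ^ (s - r) *
        ∑ k ∈ Finset.range ((j - r).toNat),
          (((n:ℝ)*x) ^ k / (Nat.factorial k)) * (ffall (j - 1 - k) r : ℝ)) / (n:ℝ)^s := by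
    intro r hr
    rw [Finset.mem_Icc] at hr
    have hinner : ∑ k ∈ Finset.range ((j - r).toNat),
        (((n : ℝ) * x) ^ k / (Nat.factorial k)) * (ffall ((k : ℤ) + r - j) r : ℝ)
        = (-1:ℝ)^r * ∑ k ∈ Finset.range ((j - r).toNat),
          (((n:ℝ)*x) ^ k / (Nat.factorial k)) * (ffall (j - 1 - k) r : ℝ) := by
      rw [Finset.mul_sum]
      apply Finset.sum_congr rfl
      intro k _
      have h1 : ffall ((k : ℤ) + r - j) r = (-1)^r * ffall (j - 1 - k) r := by
        rw [ffall_reflect ((k : ℤ) + r - j) r]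
        congr 1
        ring_nf
      rw [h1]
      push_cast
      ring
    rw [hinner]
    have hpowx : (-x) ^ (s - r) = (-1:ℝ)^(s-r) * x^(s-r) := by
      rw [neg_pow]
    have hpown : ((n:ℝ)*x) ^ (s - r) = (n:ℝ)^(s-r) * x^(s-r) := by
      rw [mul_pow]
    have hsign : (-1:ℝ)^(s-r) * (-1:ℝ)^r = (-1:ℝ)^s := by
      rw [← pow_add, Nat.sub_add_cancel hr.2]
    have hnn : (n:ℝ)^(s-r) * (n:ℝ)^r = (n:ℝ)^s := by
      rw [← pow_add, Nat.sub_add_cancel hr.2]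
    rw [hpowx, hpown, ← hsign, ← hnn]
    have hnr : (n:ℝ)^r ≠ 0 := pow_ne_zero _ hn0
    field_simp
  rw [Finset.sum_congr rfl hsum, ← Finset.sum_div, ← Finset.mul_sum]
  field_simp
  ring

lemma gK_nonneg (j : ℤ) (s : ℕ) (t : ℝ) (ht : 0 ≤ t) : 0 ≤ gKsj j s t := by
  unfold gKsj
  apply mul_nonneg (Real.exp_pos _).le
  apply Finset.sum_nonneg
  intro r _
  apply mul_nonneg (by positivity)
  apply Finset.sum_nonneg
  intro k hk
  exact mul_nonneg (by positivity) (ffall_inner_nonneg j r k hk)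

lemma gK_bdd (j : ℤ) (s : ℕ) : BddAbove (gKsj j s '' Set.Ici 0) := by
  refine ⟨∑ r ∈ Finset.Icc 1 s,
      (s.choose r : ℝ) * ∑ k ∈ Finset.range ((j - r).toNat),
        (((s - r + k).factorial : ℝ) / (Nat.factorial k)) * (ffall (j - 1 - k) r : ℝ), ?_⟩
  rintro y ⟨t, ht, rfl⟩
  have ht : (0:ℝ) ≤ t := ht
  unfold gKsj
  rw [Finset.mul_sum]
  apply Finset.sum_le_sum
  intro r _
  rw [show Real.exp (-t) * ((s.choose r : ℝ) * t ^ (s - r) *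
      ∑ k ∈ Finset.range ((j - r).toNat),
        (t ^ k / (Nat.factorial k)) * (ffall (j - 1 - k) r : ℝ))
    = (s.choose r : ℝ) * ∑ k ∈ Finset.range ((j - r).toNat),
        (Real.exp (-t) * (t ^ (s - r) * (t ^ k / (Nat.factorial k)))) * (ffall (j - 1 - k) r : ℝ) by
      rw [Finset.mul_sum, Finset.mul_sum]
      congr 1
      rw [Finset.mul_sum]
      apply Finset.sum_congr rfl
      intro k _
      ring]
  apply mul_le_mul_of_nonneg_left _ (by positivity)
  apply Finset.sum_le_sum
  intro k hk
  apply mul_le_mul_of_nonneg_right _ (ffall_inner_nonneg j r k hk)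
  have hm : t ^ (s - r + k) ≤ ((s - r + k).factorial : ℝ) * Real.exp t := by
    have h := pow_div_fac_le_exp t ht (s - r + k)
    have hf : (0:ℝ) < ((s - r + k).factorial : ℝ) := by
      exact_mod_cast Nat.factorial_pos _
    rw [div_le_iff₀ hf] at h
    linarith [h]
  have hk0 : (0:ℝ) < (Nat.factorial k : ℝ) := by exact_mod_cast Nat.factorial_pos k
  rw [Real.exp_neg]
  rw [show (Real.exp t)⁻¹ * (t ^ (s - r) * (t ^ k / (Nat.factorial k)))
      = t ^ (s - r + k) * (Real.exp t)⁻¹ / (Nat.factorial k) by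
    rw [pow_add]; ring]
  rw [div_le_div_iff₀ hk0 hk0]
  have hexp : (0:ℝ) < Real.exp t := Real.exp_pos t
  calc t ^ (s - r + k) * (Real.exp t)⁻¹ * (Nat.factorial k : ℝ)
      ≤ (((s - r + k).factorial : ℝ) * Real.exp t) * (Real.exp t)⁻¹ * (Nat.factorial k : ℝ) := by
        apply mul_le_mul_of_nonneg_right _ hk0.le
        exact mul_le_mul_of_nonneg_right hm (by positivity)
    _ = ((s - r + k).factorial : ℝ) * (Nat.factorial k : ℝ) := by
        field_simp

/-- sign and size of `M_{n,j,s,2}`. -/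
theorem stmt_5 (j : ℤ) (s : ℕ) (hs : 1 ≤ s) (n : ℕ) (hn : 1 ≤ n) :
    (2 ≤ j → ∀ x ≥ (0 : ℝ), 0 ≤ (-1 : ℝ) ^ (s + 1) * Mnjs2 n j s x) ∧
    BddAbove (gKsj j s '' Set.Ici 0) ∧
    (∀ x ≥ (0 : ℝ), |Mnjs2 n j s x| ≤ sSup (gKsj j s '' Set.Ici 0) / (n : ℝ) ^ s) ∧
    (j ≤ 1 → sSup (gKsj j s '' Set.Ici 0) = 0) := by
  have hn0 : (0:ℝ) < (n:ℝ) := by exact_mod_cast Nat.lt_of_lt_of_le Nat.zero_lt_one hn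
  have hbdd := gK_bdd j s
  refine ⟨?_, hbdd, ?_, ?_⟩
  · intro _ x hx
    rw [key_eq n hn j s x]
    rw [← mul_assoc, ← sq, ← pow_mul, mul_comm (s+1) 2, pow_mul]
    norm_num
    exact div_nonneg (gK_nonneg j s _ (by positivity)) (by positivity)
  · intro x hx
    rw [key_eq n hn j s x, abs_mul, abs_pow, abs_neg, abs_one, one_pow, one_mul]
    have h1 : 0 ≤ gKsj j s ((n:ℝ)*x) / (n:ℝ)^s :=
      div_nonneg (gK_nonneg j s _ (by positivity)) (by positivity)
    rw [abs_of_nonneg h1]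
    apply div_le_div_of_nonneg_right ?_ (by positivity)
    · exact le_csSup hbdd ⟨(n:ℝ)*x, Set.mem_Ici.mpr (by positivity), rfl⟩
  · intro hj
    have hzero : ∀ t : ℝ, gKsj j s t = 0 := by
      intro t
      unfold gKsj
      rw [Finset.sum_eq_zero, mul_zero]
      intro r hr
      rw [Finset.mem_Icc] at hr
      have : (j - r).toNat = 0 := by omega
      rw [this]
      simp
    have himg : gKsj j s '' Set.Ici 0 = {0} := by
      ext y
      simp only [Set.mem_image, Set.mem_singleton_iff]
      constructor
      · rintro ⟨t, _, rfl⟩; exact hzero t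
      · rintro rfl; exact ⟨0, Set.self_mem_Ici, hzero 0⟩
    rw [himg, csSup_singleton]
end
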